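/- arXiv:2111.03900 — 2 statements merged into one kernel-verified Lean document; each statement's English description precedes it below -/
import Mathlib

section
/- Let x : ℝ₊ → ℝ₊ be locally absolutely continuous and satisfy x'(t) ≤ −η(t) x(t) for almost every t ≥ 0, where η : ℝ₊ → ℝ₊ is locally integrable and satisfies the persistence condition (1/τ)∫_t^{t+τ} η(s) ds ≥ μ for all t ≥ 0 and some τ > 0, μ ∈ (0,1]. Then x(t) ≤ x(0) e^{μτ} e^{−μt} for all t ≥ 0. -/
/-! Since `η, x ≥ 0`, the inequality `x' ≤ -η x` makes `x` nonincreasing, so over any window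
`[s, u]` it gives `x u * (1 + ∫_s^u η) ≤ x s`. Chaining `n` windows of equal `η`-mass
`E / n`, where `E = ∫_0^t η`, yields `x t * (1 + E / n) ^ n ≤ x 0`, and `n → ∞` gives the
Grönwall bound `x t ≤ x 0 * exp (-E)`. Summing the persistence condition over the windows
`[kτ, (k+1)τ]` gives `E ≥ μ (t - τ)`. -/

open MeasureTheory intervalIntegral Set Filter

/-- Each point `s` is obtained from the previous one by the intermediate value theorem for `E`. -/
theorem exists_mul_one_add_pow_le_of_window {F E : ℝ → ℝ} {a b : ℝ} (hab : a ≤ b)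
    (hE : ContinuousOn E (Icc a b)) (hEab : E a ≤ E b)
    (hF : ∀ s ∈ Icc a b, ∀ u ∈ Icc s b, F u * (1 + (E u - E s)) ≤ F s) (n : ℕ) :
    ∀ k ≤ n, ∃ s ∈ Icc a b, E s = E a + k * ((E b - E a) / n) ∧
      F s * (1 + (E b - E a) / n) ^ k ≤ F a := by
  set δ := (E b - E a) / n
  have hδ : 0 ≤ δ := div_nonneg (sub_nonneg.2 hEab) n.cast_nonneg
  intro k
  induction k with
  | zero => exact fun _ => ⟨a, left_mem_Icc.2 hab, by simp, by simp⟩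
  | succ k ih =>
    intro hk
    obtain ⟨s, hs, hEs, hFs⟩ := ih (by omega)
    have hnδ : (k + 1 : ℝ) * δ ≤ E b - E a := by
      have hn : (n : ℝ) ≠ 0 := by exact_mod_cast (show n ≠ 0 by omega)
      calc (k + 1 : ℝ) * δ ≤ n * δ := by gcongr; exact_mod_cast hk
        _ = E b - E a := by simp only [δ]; field_simp
    obtain ⟨u, hu, hEu⟩ := intermediate_value_Icc hs.2 (hE.mono (Icc_subset_Icc_left hs.1))
      (show E a + (k + 1) * δ ∈ Icc (E s) (E b) from ⟨by linarith, by linarith⟩)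
    refine ⟨u, ⟨hs.1.trans hu.1, hu.2⟩, by push_cast; linarith, ?_⟩
    calc F u * (1 + δ) ^ (k + 1) = F u * (1 + (E u - E s)) * (1 + δ) ^ k := by
          rw [hEu, hEs]; ring
      _ ≤ F s * (1 + δ) ^ k :=
          mul_le_mul_of_nonneg_right (hF s hs u hu) (pow_nonneg (by linarith) k)
      _ ≤ F a := hFs

theorem mul_exp_sub_le_of_window {F E : ℝ → ℝ} {a b : ℝ} (hab : a ≤ b)
    (hE : ContinuousOn E (Icc a b)) (hEab : E a ≤ E b)
    (hF : ∀ s ∈ Icc a b, ∀ u ∈ Icc s b, F u * (1 + (E u - E s)) ≤ F s) :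
    F b * Real.exp (E b - E a) ≤ F a := by
  have hδ (n : ℕ) : 0 ≤ 1 + (E b - E a) / n := by
    have := div_nonneg (sub_nonneg.2 hEab) n.cast_nonneg; linarith
  have hpow : ∀ n : ℕ, 1 ≤ n → F b * (1 + (E b - E a) / n) ^ n ≤ F a := by
    intro n hn
    obtain ⟨s, hs, hEs, hFs⟩ := exists_mul_one_add_pow_le_of_window hab hE hEab hF n n le_rfl
    have hEsb : E s = E b := by
      have : (n : ℝ) ≠ 0 := by exact_mod_cast (show n ≠ 0 by omega)
      rw [hEs]; field_simp; ring
    have hFb : F b ≤ F s := by simpa [hEsb] using hF s hs b ⟨hs.2, le_rfl⟩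
    exact (mul_le_mul_of_nonneg_right hFb (pow_nonneg (hδ n) n)).trans hFs
  exact le_of_tendsto ((Real.tendsto_one_add_div_pow_exp _).const_mul (F b))
    (eventually_atTop.2 ⟨1, hpow⟩)

theorem mul_le_integral_of_persistent {η : ℝ → ℝ} {τ μ : ℝ}
    (hint : ∀ t, 0 ≤ t → IntervalIntegrable η volume 0 t)
    (hpers : ∀ t, 0 ≤ t → μ * τ ≤ ∫ s in t..(t + τ), η s) (hτ : 0 ≤ τ) (m : ℕ) :
    μ * (m * τ) ≤ ∫ s in (0 : ℝ)..(m * τ), η s := by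
  induction m with
  | zero => simp
  | succ m ih =>
    have hm : 0 ≤ (m : ℝ) * τ := by positivity
    have hsplit := integral_add_adjacent_intervals (hint _ hm)
      ((hint _ hm).symm.trans (hint (m * τ + τ) (by positivity)))
    rw [Nat.cast_succ, add_one_mul, ← hsplit]
    linarith [hpers _ hm]

theorem mul_sub_le_integral_of_persistent {η : ℝ → ℝ} {τ μ t : ℝ} (hτ : 0 < τ) (hμ : 0 ≤ μ)
    (hη : ∀ t, 0 ≤ η t) (hint : ∀ t, 0 ≤ t → IntervalIntegrable η volume 0 t)
    (hpers : ∀ t, 0 ≤ t → μ * τ ≤ ∫ s in t..(t + τ), η s) (ht : 0 ≤ t) :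
    μ * (t - τ) ≤ ∫ s in (0 : ℝ)..t, η s := by
  set k := ⌊t / τ⌋₊
  have hkt : k * τ ≤ t := (le_div_iff₀ hτ).1 (Nat.floor_le (by positivity))
  have htk : t - τ ≤ k * τ := by
    have := (div_lt_iff₀ hτ).1 (Nat.lt_floor_add_one (t / τ)); linarith
  calc μ * (t - τ) ≤ μ * (k * τ) := by gcongr
    _ ≤ ∫ s in (0 : ℝ)..(k * τ), η s := mul_le_integral_of_persistent hint hpers hτ.le k
    _ ≤ ∫ s in (0 : ℝ)..t, η s :=
      integral_mono_interval le_rfl (by positivity) hkt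
        (Eventually.of_forall hη) (hint t ht)

theorem continuousOn_Icc_of_eq_add_integral {x g : ℝ → ℝ} {b : ℝ} (hb : 0 ≤ b)
    (hg : IntervalIntegrable g volume 0 b)
    (hx : ∀ t, 0 ≤ t → x t = x 0 + ∫ s in (0 : ℝ)..t, g s) :
    ContinuousOn x (Icc 0 b) := by
  have hprim := continuousOn_primitive_interval' hg left_mem_uIcc
  rw [uIcc_of_le hb] at hprim
  exact (continuousOn_const.add hprim).congr fun t ht => hx t ht.1

theorem intervalIntegrable_mul_of_eq_add_integral {x g η : ℝ → ℝ} {s u : ℝ}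
    (hηint : ∀ t, 0 ≤ t → IntervalIntegrable η volume 0 t)
    (hgint : ∀ t, 0 ≤ t → IntervalIntegrable g volume 0 t)
    (hx : ∀ t, 0 ≤ t → x t = x 0 + ∫ s in (0 : ℝ)..t, g s) (hs : 0 ≤ s) (hsu : s ≤ u) :
    IntervalIntegrable (fun r => η r * x r) volume s u := by
  have hu : 0 ≤ u := hs.trans hsu
  refine ((hηint s hs).symm.trans (hηint u hu)).mul_continuousOn ?_
  rw [uIcc_of_le hsu]
  exact (continuousOn_Icc_of_eq_add_integral hu (hgint u hu) hx).mono (Icc_subset_Icc_left hs)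

theorem add_integral_mul_le_of_eq_add_integral {x g η : ℝ → ℝ} {s u : ℝ}
    (hηint : ∀ t, 0 ≤ t → IntervalIntegrable η volume 0 t)
    (hgint : ∀ t, 0 ≤ t → IntervalIntegrable g volume 0 t)
    (hx : ∀ t, 0 ≤ t → x t = x 0 + ∫ s in (0 : ℝ)..t, g s)
    (hineq : ∀ᵐ t ∂volume, 0 ≤ t → g t ≤ -η t * x t) (hs : 0 ≤ s) (hsu : s ≤ u) :
    x u + ∫ r in s..u, η r * x r ≤ x s := by
  have hu : 0 ≤ u := hs.trans hsu
  have hdiff : x u - x s = ∫ r in s..u, g r := by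
    rw [hx u hu, hx s hs, ← integral_interval_sub_left (hgint u hu) (hgint s hs)]
    ring
  have hcmp : ∫ r in s..u, g r ≤ ∫ r in s..u, -(η r * x r) := by
    refine integral_mono_ae_restrict hsu ((hgint s hs).symm.trans (hgint u hu))
      (intervalIntegrable_mul_of_eq_add_integral hηint hgint hx hs hsu).neg ?_
    filter_upwards [ae_restrict_of_ae hineq, ae_restrict_mem measurableSet_Icc] with r hr hrsu
    simpa only [neg_mul] using hr (hs.trans hrsu.1)
  rw [intervalIntegral.integral_neg] at hcmp
  linarith

theorem antitoneOn_of_add_integral_mul_le {x η : ℝ → ℝ} (hη : ∀ t, 0 ≤ η t)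
    (hxpos : ∀ t, 0 ≤ t → 0 ≤ x t)
    (hdec : ∀ s u, 0 ≤ s → s ≤ u → x u + ∫ r in s..u, η r * x r ≤ x s) :
    AntitoneOn x (Ici 0) := by
  intro s hs u _ hsu
  have hpos : 0 ≤ ∫ r in s..u, η r * x r :=
    intervalIntegral.integral_nonneg hsu fun r hr => mul_nonneg (hη r) (hxpos r (le_trans hs hr.1))
  linarith [hdec s u hs hsu]

theorem mul_one_add_integral_le_of_antitoneOn {x η : ℝ → ℝ} {s u : ℝ} (hsu : s ≤ u)
    (hη : ∀ t, 0 ≤ η t) (hηint : IntervalIntegrable η volume s u)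
    (hηx : IntervalIntegrable (fun r => η r * x r) volume s u) (hanti : AntitoneOn x (Icc s u))
    (hdec : x u + ∫ r in s..u, η r * x r ≤ x s) :
    x u * (1 + ∫ r in s..u, η r) ≤ x s := by
  have hlow : (∫ r in s..u, η r) * x u ≤ ∫ r in s..u, η r * x r := by
    rw [← intervalIntegral.integral_mul_const]
    exact integral_mono_on hsu (hηint.mul_const _) hηx fun r hr =>
      mul_le_mul_of_nonneg_left (hanti hr (right_mem_Icc.2 hsu) hr.2) (hη r)
  linarith

theorem mul_exp_integral_le_of_eq_add_integral {x g η : ℝ → ℝ} {t : ℝ}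
    (hxpos : ∀ t, 0 ≤ t → 0 ≤ x t) (hη : ∀ t, 0 ≤ η t)
    (hηint : ∀ t, 0 ≤ t → IntervalIntegrable η volume 0 t)
    (hgint : ∀ t, 0 ≤ t → IntervalIntegrable g volume 0 t)
    (hx : ∀ t, 0 ≤ t → x t = x 0 + ∫ s in (0 : ℝ)..t, g s)
    (hineq : ∀ᵐ t ∂volume, 0 ≤ t → g t ≤ -η t * x t) (ht : 0 ≤ t) :
    x t * Real.exp (∫ s in (0 : ℝ)..t, η s) ≤ x 0 := by
  have hdec s u (hs : 0 ≤ s) (hsu : s ≤ u) :=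
    add_integral_mul_le_of_eq_add_integral hηint hgint hx hineq hs hsu
  have hanti := antitoneOn_of_add_integral_mul_le hη hxpos hdec
  have hE : ContinuousOn (fun t => ∫ s in (0 : ℝ)..t, η s) (Icc 0 t) := by
    simpa only [uIcc_of_le ht] using continuousOn_primitive_interval' (hηint t ht) left_mem_uIcc
  have hEt : 0 ≤ ∫ s in (0 : ℝ)..t, η s := intervalIntegral.integral_nonneg ht fun r _ => hη r
  have := mul_exp_sub_le_of_window ht hE (by simpa using hEt) fun s ⟨hs, _⟩ u ⟨hsu, _⟩ => by
    have hu : 0 ≤ u := hs.trans hsu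
    rw [integral_interval_sub_left (hηint u hu) (hηint s hs)]
    exact mul_one_add_integral_le_of_antitoneOn hsu hη ((hηint s hs).symm.trans (hηint u hu))
      (intervalIntegrable_mul_of_eq_add_integral hηint hgint hx hs hsu)
      (hanti.mono (Icc_subset_Ici_iff hsu |>.2 hs)) (hdec s u hs hsu)
  simpa using this

/-- **Exponential decay under a persistent dissipation rate.** Let `x : ℝ₊ → ℝ₊` be locally
absolutely continuous (encoded: `x t = x 0 + ∫_0^t g`, with `g` locally integrable) and
satisfy `x' ≤ −η x` a.e. on `ℝ₊`, where `η ≥ 0` is locally integrable and persistent: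
`(1/τ) ∫_t^{t+τ} η ≥ μ` for all `t ≥ 0`. Then `x t ≤ x 0 · e^{μτ} · e^{−μt}` for `t ≥ 0`. -/
theorem stmt11 (x g η : ℝ → ℝ) (τ μ : ℝ) (hτ : 0 < τ) (hμ : μ ∈ Set.Ioc (0 : ℝ) 1)
    (hxpos : ∀ t, 0 ≤ t → 0 ≤ x t)
    (hηpos : ∀ t, 0 ≤ η t)
    (hηint : ∀ t, 0 ≤ t → IntervalIntegrable η volume 0 t)
    (hgint : ∀ t, 0 ≤ t → IntervalIntegrable g volume 0 t)
    (hx : ∀ t, 0 ≤ t → x t = x 0 + ∫ s in (0:ℝ)..t, g s)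
    (hineq : ∀ᵐ t ∂volume, 0 ≤ t → g t ≤ -η t * x t)
    (hpers : ∀ t, 0 ≤ t → μ ≤ (1 / τ) * ∫ s in t..(t + τ), η s) :
    ∀ t, 0 ≤ t → x t ≤ x 0 * Real.exp (μ * τ) * Real.exp (-μ * t) := by
  intro t ht
  have hgron := mul_exp_integral_le_of_eq_add_integral hxpos hηpos hηint hgint hx hineq ht
  have hmass : μ * (t - τ) ≤ ∫ s in (0 : ℝ)..t, η s := by
    refine mul_sub_le_integral_of_persistent hτ hμ.1.le hηpos hηint (fun s hs => ?_) ht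
    have := hpers s hs
    rwa [one_div, inv_mul_eq_div, le_div_iff₀ hτ] at this
  calc x t ≤ x 0 * Real.exp (-∫ s in (0 : ℝ)..t, η s) := by
        rw [Real.exp_neg, ← div_eq_mul_inv, le_div_iff₀ (Real.exp_pos _)]
        exact hgron
    _ ≤ x 0 * Real.exp (μ * τ + -μ * t) := by
        gcongr
        · exact hxpos 0 le_rfl
        · linarith
    _ = x 0 * Real.exp (μ * τ) * Real.exp (-μ * t) := by rw [Real.exp_add, mul_assoc]
end

section
/- Let (t_k)_{k≥0} be increasing with t_0 = 0 and t_{k+1} − t_k ≥ τ_d > 0, and let X : ℝ₊ → ℝ₊ satisfy the recursive decay X(t) ≤ (1/ν²) X(t_k) exp(−λ_k (t − t_k)) for t ∈ [t_k, t_{k+1}) with λ_k ≥ 0 and ν ∈ (0,1]. Suppose moreover Σ_{j<k} λ_j(t_{j+1}−t_j) + λ_k(t−t_k) ≥ μν²·t − C for some constants μ, C > 0 (persistence of the decay rates). Then X(t) ≤ K·X(0)·exp(−(μν² − (2/τ_d)log(1/ν))·t) for all t ≥ 0 and a constant K depending only on ν, μ, C, τ_d; in particular X(t) → 0 exponentially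 whenever (2/(μν²))log(1/ν) < τ_d. -/
/-!
Iterating the decay estimate across the switching times gives
`X(s) ≤ ν^{-2(k+1)} X(0) exp(-Λ(s))` on `[t_k, t_{k+1}]`, where `Λ` is the accumulated decay
`∑_{j<k} λ_j (t_{j+1} - t_j) + λ_k (s - t_k)`. Persistence bounds `exp(-Λ(s))` by
`e^C exp(-μν² s)`, and the dwell time forces `k ≤ s/τ_d`, so the switching penalty
`ν^{-2k} = exp(2k log(1/ν))` is at most `exp((2/τ_d) log(1/ν) s)`.
-/

open Finset Real Set

def cumulativeDecay (t lam : ℕ → ℝ) (k : ℕ) (s : ℝ) : ℝ :=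
  (∑ j ∈ range k, lam j * (t (j + 1) - t j)) + lam k * (s - t k)

section SwitchingTimes

variable {t : ℕ → ℝ} {τ : ℝ}

theorem nat_mul_le_of_dwell (h0 : t 0 = 0) (hdwell : ∀ k, t k + τ ≤ t (k + 1)) (k : ℕ) :
    k * τ ≤ t k := by
  induction k with
  | zero => simp [h0]
  | succ k ih => push_cast; linarith [hdwell k]

theorem exists_mem_Icc_of_le_succ (ht : ∀ k, t k ≤ t (k + 1)) {s : ℝ} (hs : t 0 ≤ s) (n : ℕ)
    (hsn : s ≤ t n) : ∃ k, s ∈ Icc (t k) (t (k + 1)) := by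
  induction n with
  | zero => exact ⟨0, hs, hsn.trans (ht 0)⟩
  | succ n ih =>
    by_cases hle : s ≤ t n
    · exact ih hle
    · exact ⟨n, (not_le.mp hle).le, hsn⟩

theorem exists_mem_Icc_of_dwell (hτ : 0 < τ) (h0 : t 0 = 0) (hdwell : ∀ k, t k + τ ≤ t (k + 1))
    {s : ℝ} (hs : 0 ≤ s) : ∃ k, s ∈ Icc (t k) (t (k + 1)) := by
  obtain ⟨n, hn⟩ := exists_nat_ge (s / τ)
  have hsn : s ≤ t n := by
    rw [div_le_iff₀ hτ] at hn
    exact hn.trans (nat_mul_le_of_dwell h0 hdwell n)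
  exact exists_mem_Icc_of_le_succ (fun k => by linarith [hdwell k]) (h0 ▸ hs) n hsn

end SwitchingTimes

theorem le_pow_mul_exp_neg_cumulativeDecay {t lam : ℕ → ℝ} {X : ℝ → ℝ} {ρ : ℝ} (hρ : 0 ≤ ρ)
    (ht : ∀ k, t k ≤ t (k + 1))
    (hdec : ∀ k, ∀ s ∈ Icc (t k) (t (k + 1)),
      X s ≤ ρ * X (t k) * exp (-(lam k) * (s - t k)))
    (k : ℕ) {s : ℝ} (hs : s ∈ Icc (t k) (t (k + 1))) :
    X s ≤ ρ ^ (k + 1) * X (t 0) * exp (-cumulativeDecay t lam k s) := by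
  induction k generalizing s with
  | zero => simpa [cumulativeDecay] using hdec 0 s hs
  | succ k ih =>
    have hend : cumulativeDecay t lam k (t (k + 1)) =
        ∑ j ∈ range (k + 1), lam j * (t (j + 1) - t j) := by
      simp [cumulativeDecay, sum_range_succ]
    calc X s ≤ ρ * X (t (k + 1)) * exp (-(lam (k + 1)) * (s - t (k + 1))) := hdec _ s hs
      _ ≤ ρ * (ρ ^ (k + 1) * X (t 0) * exp (-cumulativeDecay t lam k (t (k + 1)))) *
            exp (-(lam (k + 1)) * (s - t (k + 1))) := by
          gcongr
          exact ih ⟨ht k, le_rfl⟩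
      _ = ρ ^ (k + 2) * X (t 0) * exp (-cumulativeDecay t lam (k + 1) s) := by
          rw [hend, cumulativeDecay, neg_add, exp_add, neg_mul]
          ring

theorem pow_succ_le_mul_exp {ρ τ s : ℝ} {k : ℕ} (hρ : 1 ≤ ρ) (hτ : 0 < τ) (hk : k * τ ≤ s) :
    ρ ^ (k + 1) ≤ ρ * exp (log ρ / τ * s) := by
  have hρ0 : 0 < ρ := zero_lt_one.trans_le hρ
  have hk' : (k : ℝ) * log ρ ≤ log ρ / τ * s := by
    rw [div_mul_eq_mul_div, le_div_iff₀ hτ]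
    linarith [mul_le_mul_of_nonneg_left hk (log_nonneg hρ)]
  calc ρ ^ (k + 1) = ρ * exp (k * log ρ) := by rw [exp_nat_mul, exp_log hρ0, pow_succ']
    _ ≤ ρ * exp (log ρ / τ * s) := by gcongr

theorem stmt19_general (τd ν μ C : ℝ) (hτd : 0 < τd) (hν : ν ∈ Set.Ioc (0 : ℝ) 1) :
    ∃ K : ℝ, 0 < K ∧
      ∀ (t : ℕ → ℝ) (X : ℝ → ℝ) (lam : ℕ → ℝ),
        t 0 = 0 →
        (∀ k, t k + τd ≤ t (k + 1)) →
        (∀ s, 0 ≤ X s) →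
        (∀ k, 0 ≤ lam k) →
        (∀ k, ∀ s ∈ Set.Icc (t k) (t (k + 1)),
            X s ≤ (1 / ν ^ 2) * X (t k) * Real.exp (-(lam k) * (s - t k))) →
        (∀ k, ∀ s ∈ Set.Icc (t k) (t (k + 1)),
            μ * ν ^ 2 * s - C ≤
              (∑ j ∈ Finset.range k, lam j * (t (j + 1) - t j)) + lam k * (s - t k)) →
        ∀ s, 0 ≤ s →
          X s ≤ K * X 0 * Real.exp (-(μ * ν ^ 2 - (2 / τd) * Real.log (1 / ν)) * s) := by
  obtain ⟨hν0, hν1⟩ := hν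
  have hρ : 1 ≤ 1 / ν ^ 2 := one_le_one_div (by positivity) (pow_le_one₀ hν0.le hν1)
  have hlog : log (1 / ν ^ 2) = 2 * log (1 / ν) := by
    rw [one_div, one_div, ← inv_pow, log_pow]; push_cast; ring
  refine ⟨1 / ν ^ 2 * exp C, by positivity, fun t X lam h0 hdwell hX _ hdec hpers s hs => ?_⟩
  obtain ⟨k, hk⟩ := exists_mem_Icc_of_dwell hτd h0 hdwell hs
  have hpen := pow_succ_le_mul_exp hρ hτd ((nat_mul_le_of_dwell h0 hdwell k).trans hk.1)
  have hdecay := le_pow_mul_exp_neg_cumulativeDecay (by positivity)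
    (fun k => by linarith [hdwell k]) hdec k hk
  rw [h0] at hdecay
  have hpersk : μ * ν ^ 2 * s - C ≤ cumulativeDecay t lam k s := hpers k s hk
  calc X s ≤ (1 / ν ^ 2) ^ (k + 1) * X 0 * exp (C - μ * ν ^ 2 * s) := by
        refine hdecay.trans (mul_le_mul_of_nonneg_left (exp_le_exp.mpr ?_) ?_)
        · linarith
        · exact mul_nonneg (by positivity) (hX 0)
    _ ≤ 1 / ν ^ 2 * exp (log (1 / ν ^ 2) / τd * s) * X 0 * exp (C - μ * ν ^ 2 * s) := by
        gcongr; exact hX 0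
    _ = 1 / ν ^ 2 * exp C * X 0 * exp (-(μ * ν ^ 2 - 2 / τd * log (1 / ν)) * s) := by
        have hexp : exp (log (1 / ν ^ 2) / τd * s) * exp (C - μ * ν ^ 2 * s) =
            exp C * exp (-(μ * ν ^ 2 - 2 / τd * log (1 / ν)) * s) := by
          rw [← exp_add, ← exp_add, hlog]
          ring_nf
        linear_combination (1 / ν ^ 2 * X 0) * hexp

/-- **Abstract switching-systems decay estimate.** Let `(t_k)` satisfy `t_0 = 0` and the
dwell-time condition `t_{k+1} − t_k ≥ τ_d > 0`, and let `X ≥ 0` satisfy the recursive decay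
`X(s) ≤ ν⁻² X(t_k) exp(−λ_k(s − t_k))` on `[t_k, t_{k+1}]` with `λ_k ≥ 0`, `ν ∈ (0,1]`,
together with the persistence of the decay rates
`Σ_{j<k} λ_j(t_{j+1}−t_j) + λ_k(s−t_k) ≥ μν²·s − C`. Then
`X(s) ≤ K·X(0)·exp(−(μν² − (2/τ_d)log(1/ν))·s)` for all `s ≥ 0`, for a constant
`K > 0` depending only on `ν, μ, C, τ_d`. -/
theorem stmt19 (τd ν μ C : ℝ) (hτd : 0 < τd) (hν : ν ∈ Set.Ioc (0 : ℝ) 1)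
    (hμ : 0 < μ) (hC : 0 < C) :
    ∃ K : ℝ, 0 < K ∧
      ∀ (t : ℕ → ℝ) (X : ℝ → ℝ) (lam : ℕ → ℝ),
        t 0 = 0 →
        (∀ k, t k + τd ≤ t (k + 1)) →
        (∀ s, 0 ≤ X s) →
        (∀ k, 0 ≤ lam k) →
        (∀ k, ∀ s ∈ Set.Icc (t k) (t (k + 1)),
            X s ≤ (1 / ν ^ 2) * X (t k) * Real.exp (-(lam k) * (s - t k))) →
        (∀ k, ∀ s ∈ Set.Icc (t k) (t (k + 1)),
            μ * ν ^ 2 * s - C ≤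
              (∑ j ∈ Finset.range k, lam j * (t (j + 1) - t j)) + lam k * (s - t k)) →
        ∀ s, 0 ≤ s →
          X s ≤ K * X 0 * Real.exp (-(μ * ν ^ 2 - (2 / τd) * Real.log (1 / ν)) * s) :=
  stmt19_general τd ν μ C hτd hν
end
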